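/- arXiv:2506.18914 — 3 statements merged into one kernel-verified Lean document; each statement's English description precedes it below -/
import Mathlib

section
/- Let a > 0, λ > 0, and μ ∈ ℂ with μ² = (c²/ℏ²)(iλ/π - 1). If ψ(v) = A·e^{μv} + B·e^{-μv} satisfies ψ(-a) = ψ(a) = 0, then ψ ≡ 0. -/
theorem stmt_10 (a lam c ℏ : ℝ) (ha : 0 < a) (hlam : 0 < lam) (hc : 0 < c) (hℏ : 0 < ℏ)
    (μ : ℂ)
    (hμ : μ ^ 2 = ((c ^ 2 / ℏ ^ 2 : ℝ) : ℂ) * (Complex.I * (lam : ℂ) / (Real.pi : ℂ) - 1))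
    (A B : ℂ) (ψ : ℝ → ℂ)
    (hψ : ∀ v : ℝ, ψ v = A * Complex.exp (μ * v) + B * Complex.exp (-(μ * v)))
    (h1 : ψ (-a) = 0) (h2 : ψ a = 0) :
    ∀ v : ℝ, ψ v = 0 := by
  rw [hψ] at h1 h2
  set x := Complex.exp (μ * a) with hxdef
  set y := Complex.exp (-(μ * a)) with hydef
  have hxne : x ≠ 0 := Complex.exp_ne_zero _
  have hxy : x * y = 1 := by
    rw [hxdef, hydef, ← Complex.exp_add]; simp
  have h1' : A * y + B * x = 0 := by
    have e1 : μ * ((-a : ℝ) : ℂ) = -(μ * a) := by push_cast; ring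
    rw [e1] at h1
    simpa [neg_neg] using h1
  have h2' : A * x + B * y = 0 := h2
  by_cases hcase : x ^ 2 = y ^ 2
  · exfalso
    have hx4 : Complex.exp (μ * (a : ℂ) * 4) = 1 := by
      have e : μ * (a : ℂ) * 4 = μ * a + μ * a + (μ * a + μ * a) := by ring
      rw [e, Complex.exp_add, Complex.exp_add]
      calc x * x * (x * x) = (x ^ 2) * (x ^ 2) := by ring
        _ = (x ^ 2) * (y ^ 2) := by rw [hcase]
        _ = (x * y) * (x * y) := by ring
        _ = 1 := by rw [hxy]; ring
    obtain ⟨n, hn⟩ := Complex.exp_eq_one_iff.mp hx4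
    -- square: μ² * 16a² = -(4π²n²)
    have key : μ ^ 2 * (16 * (a : ℂ) ^ 2) = -(4 * (Real.pi : ℂ) ^ 2 * (n : ℂ) ^ 2) := by
      have hI : Complex.I ^ 2 = -1 := Complex.I_sq
      linear_combination (μ * (a : ℂ) * 4 + (n : ℂ) * (2 * (Real.pi : ℂ) * Complex.I)) * hn +
        (4 * (Real.pi : ℂ) ^ 2 * (n : ℂ) ^ 2) * hI
    rw [hμ] at key
    have key2 : ((c ^ 2 / ℏ ^ 2 * (lam / Real.pi) * (16 * a ^ 2) : ℝ):ℂ) * Complex.I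
        + ((- (c^2/ℏ^2) * (16 * a^2) : ℝ):ℂ) = ((-(4 * Real.pi ^ 2 * (n:ℝ) ^ 2) : ℝ):ℂ) := by
      push_cast at key ⊢
      linear_combination key
    have him := congrArg Complex.im key2
    have hπ : Real.pi ≠ 0 := Real.pi_ne_zero
    have hℏ0 : ℏ ≠ 0 := hℏ.ne'
    have ha0 : a ≠ 0 := ha.ne'
    simp only [Complex.add_im, Complex.mul_im, Complex.I_im, Complex.I_re,
      Complex.ofReal_im, Complex.ofReal_re] at him
    -- him should now be a real equation forcing contradiction
    have hpos : (0:ℝ) < c ^ 2 / ℏ ^ 2 * (lam / Real.pi) * (16 * a ^ 2) := by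
      have := Real.pi_pos
      positivity
    linarith [him, hpos]
  · have hA : A * (x ^ 2 - y ^ 2) = 0 := by linear_combination x * h2' - y * h1'
    have hA0 : A = 0 := by
      rcases mul_eq_zero.mp hA with h | h
      · exact h
      · exact absurd h (sub_ne_zero.mpr hcase)
    have hB0 : B = 0 := by
      rw [hA0] at h1'
      simp at h1'
      rcases h1' with h | h
      · exact h
      · exact absurd h hxne
    intro v
    rw [hψ, hA0, hB0]; ring
end

section
/- Let a, λ, c, ℏ > 0 and suppose ψ : ℝ → ℂ is C², satisfies π(ψ + (ℏ²/c²)ψ'') = iλψ on [-a, a], and ψ(±a) = 0. Then ψ vanishes identically on [-a, a]. -/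
/-!
With `k = (iλ - π) / (π ℏ² / c²)` the equation reads `ψ'' = k ψ`, and `Im k = λ c² / (π ℏ²) ≠ 0`.
The current `Im (ψ' ψ̄)` has derivative `Im (ψ'' ψ̄) = Im k · |ψ|²`, because `ψ' ψ̄'` is real.
It vanishes at both ends by the boundary conditions, so `Im k · Im (ψ' ψ̄)` is nondecreasing with
equal endpoint values, hence constant, and its derivative `(Im k)² |ψ|²` vanishes.
-/

open Set Complex ComplexConjugate Topology

theorem eq_zero_of_hasDerivAt_nonneg_of_eq_endpoints {F F' : ℝ → ℝ} {a b : ℝ}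
    (hF : ContinuousOn F (Icc a b)) (hF' : ∀ t ∈ Ioo a b, HasDerivAt F (F' t) t)
    (hF'_nonneg : ∀ t ∈ Ioo a b, 0 ≤ F' t) (hab : F a = F b) :
    ∀ t ∈ Ioo a b, F' t = 0 := by
  intro t ht
  have hmono : MonotoneOn F (Icc a b) := by
    refine monotoneOn_of_hasDerivWithinAt_nonneg (f' := F') (convex_Icc a b) hF ?_ ?_ <;>
      rw [interior_Icc]
    · exact fun x hx => (hF' x hx).hasDerivWithinAt
    · exact hF'_nonneg
  have hconst : ∀ᶠ s in 𝓝 t, F s = F a := by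
    filter_upwards [Ioo_mem_nhds ht.1 ht.2] with s hs
    have hs' : s ∈ Icc a b := Ioo_subset_Icc_self hs
    have hab' : a ≤ b := (ht.1.trans ht.2).le
    exact le_antisymm (hab ▸ hmono hs' (right_mem_Icc.2 hab') hs.2.le)
      (hmono (left_mem_Icc.2 hab') hs' hs.1.le)
  exact (hF' t ht).unique ((hasDerivAt_const t (F a)).congr_of_eventuallyEq hconst)

theorem HasDerivWithinAt.im_mul_conj {ψ ψ' : ℝ → ℂ} {ψ'' : ℂ} {s : Set ℝ} {t : ℝ}
    (h₁ : HasDerivWithinAt ψ (ψ' t) s t) (h₂ : HasDerivWithinAt ψ' ψ'' s t) :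
    HasDerivWithinAt (fun t => (ψ' t * conj (ψ t)).im) (ψ'' * conj (ψ t)).im s t := by
  have h := h₂.mul h₁.star
  have hreal : (ψ' t * conj (ψ' t)).im = 0 := by rw [mul_conj]; exact ofReal_im _
  exact (imCLM.hasFDerivAt.comp_hasDerivWithinAt t h).congr_deriv (by simp [hreal])

theorem eqOn_zero_of_deriv2_eq_mul_of_im_ne_zero {a b : ℝ} {k : ℂ} {ψ ψ' ψ'' : ℝ → ℂ}
    (hψ₁ : ∀ t ∈ Icc a b, HasDerivWithinAt ψ (ψ' t) (Icc a b) t)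
    (hψ₂ : ∀ t ∈ Icc a b, HasDerivWithinAt ψ' (ψ'' t) (Icc a b) t)
    (hode : ∀ t ∈ Icc a b, ψ'' t = k * ψ t) (hk : k.im ≠ 0) (ha : ψ a = 0) (hb : ψ b = 0) :
    EqOn ψ 0 (Icc a b) := by
  have hF : ∀ t ∈ Icc a b, HasDerivWithinAt (fun t => k.im * (ψ' t * conj (ψ t)).im)
      (k.im * (ψ'' t * conj (ψ t)).im) (Icc a b) t := fun t ht =>
    ((hψ₁ t ht).im_mul_conj (hψ₂ t ht)).const_mul k.im
  have hF'_eq : ∀ t ∈ Icc a b, k.im * (ψ'' t * conj (ψ t)).im = k.im ^ 2 * normSq (ψ t) := by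
    intro t ht
    rw [hode t ht, mul_assoc, mul_conj, im_mul_ofReal]
    ring
  have hF'_zero := eq_zero_of_hasDerivAt_nonneg_of_eq_endpoints
    (fun t ht => (hF t ht).continuousWithinAt)
    (fun t ht => (hF t (Ioo_subset_Icc_self ht)).hasDerivAt (Icc_mem_nhds ht.1 ht.2))
    (fun t ht => hF'_eq t (Ioo_subset_Icc_self ht) ▸
      mul_nonneg (sq_nonneg _) (normSq_nonneg _)) (by simp [ha, hb])
  intro t ht
  rcases eq_endpoints_or_mem_Ioo_of_mem_Icc ht with rfl | rfl | ht'
  · exact ha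
  · exact hb
  · have h := hF'_eq t ht ▸ hF'_zero t ht'
    simpa [hk] using h

theorem stmt_12_general (a lam c ℏ : ℝ) (hlam : 0 < lam) (hc : 0 < c) (hℏ : 0 < ℏ)
    (ψ ψ' ψ'' : ℝ → ℂ)
    (hψ1 : ∀ v ∈ Set.Icc (-a) a, HasDerivWithinAt ψ (ψ' v) (Set.Icc (-a) a) v)
    (hψ2 : ∀ v ∈ Set.Icc (-a) a, HasDerivWithinAt ψ' (ψ'' v) (Set.Icc (-a) a) v)
    (heq : ∀ v ∈ Set.Icc (-a) a,
      (Real.pi : ℂ) * (ψ v + ((ℏ ^ 2 / c ^ 2 : ℝ) : ℂ) * ψ'' v)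
        = Complex.I * (lam : ℂ) * ψ v)
    (hb1 : ψ (-a) = 0) (hb2 : ψ a = 0) :
    ∀ v ∈ Set.Icc (-a) a, ψ v = 0 := by
  set r : ℝ := ℏ ^ 2 / c ^ 2
  have hr : r ≠ 0 := by positivity
  set k : ℂ := ((-1 / r : ℝ) : ℂ) + ((lam / (Real.pi * r) : ℝ) : ℂ) * I
  have hode : ∀ v ∈ Icc (-a) a, ψ'' v = k * ψ v := by
    intro v hv
    have hr' : (r : ℂ) ≠ 0 := ofReal_ne_zero.2 hr
    have hπ : (Real.pi : ℂ) ≠ 0 := ofReal_ne_zero.2 Real.pi_ne_zero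
    simp only [k]
    push_cast
    field_simp
    linear_combination heq v hv
  have hk : k.im ≠ 0 := by
    simp only [k, add_im, ofReal_im, mul_im, ofReal_re, I_re, I_im, mul_zero, mul_one, zero_add]
    positivity
  exact eqOn_zero_of_deriv2_eq_mul_of_im_ne_zero hψ1 hψ2 hode hk hb1 hb2

theorem stmt_12 (a lam c ℏ : ℝ) (ha : 0 < a) (hlam : 0 < lam) (hc : 0 < c) (hℏ : 0 < ℏ)
    (ψ ψ' ψ'' : ℝ → ℂ)
    (hψ1 : ∀ v ∈ Set.Icc (-a) a, HasDerivWithinAt ψ (ψ' v) (Set.Icc (-a) a) v)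
    (hψ2 : ∀ v ∈ Set.Icc (-a) a, HasDerivWithinAt ψ' (ψ'' v) (Set.Icc (-a) a) v)
    (hψ3 : ContinuousOn ψ'' (Set.Icc (-a) a))
    (heq : ∀ v ∈ Set.Icc (-a) a,
      (Real.pi : ℂ) * (ψ v + ((ℏ ^ 2 / c ^ 2 : ℝ) : ℂ) * ψ'' v)
        = Complex.I * (lam : ℂ) * ψ v)
    (hb1 : ψ (-a) = 0) (hb2 : ψ a = 0) :
    ∀ v ∈ Set.Icc (-a) a, ψ v = 0 :=
  stmt_12_general a lam c ℏ hlam hc hℏ ψ ψ' ψ'' hψ1 hψ2 heq hb1 hb2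
end

section
/- Let a, λ, c, ℏ > 0 and suppose ψ : ℝ → ℂ is C², satisfies π(ψ + (ℏ²/c²)ψ'') = -iλψ on [-a, a], and ψ(±a) = 0. Then ψ vanishes identically on [-a, a]. -/
open MeasureTheory intervalIntegral Set Complex

theorem stmt_13 (a lam c ℏ : ℝ) (ha : 0 < a) (hlam : 0 < lam) (hc : 0 < c) (hℏ : 0 < ℏ)
    (ψ ψ' ψ'' : ℝ → ℂ)
    (hψ1 : ∀ v ∈ Set.Icc (-a) a, HasDerivWithinAt ψ (ψ' v) (Set.Icc (-a) a) v)
    (hψ2 : ∀ v ∈ Set.Icc (-a) a, HasDerivWithinAt ψ' (ψ'' v) (Set.Icc (-a) a) v)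
    (hψ3 : ContinuousOn ψ'' (Set.Icc (-a) a))
    (heq : ∀ v ∈ Set.Icc (-a) a,
      (Real.pi : ℂ) * (ψ v + ((ℏ ^ 2 / c ^ 2 : ℝ) : ℂ) * ψ'' v)
        = -(Complex.I * (lam : ℂ)) * ψ v)
    (hb1 : ψ (-a) = 0) (hb2 : ψ a = 0) :
    ∀ v ∈ Set.Icc (-a) a, ψ v = 0 := by
  have haa : -a ≤ a := by linarith
  have huIcc : Set.uIcc (-a) a = Set.Icc (-a) a := Set.uIcc_of_le haa
  set r : ℝ := ℏ ^ 2 / c ^ 2 with hrdef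
  have hr : 0 < r := by positivity
  have hπ : (0:ℝ) < Real.pi := Real.pi_pos
  set k : ℂ := (-(Complex.I * (lam : ℂ)) - (Real.pi : ℂ)) / ((Real.pi * r : ℝ) : ℂ) with hkdef
  -- Step A: ψ'' = k ψ on Icc
  have hA : ∀ v ∈ Set.Icc (-a) a, ψ'' v = k * ψ v := by
    intro v hv
    have h := heq v hv
    have hπr : ((Real.pi * r : ℝ) : ℂ) ≠ 0 := by
      exact_mod_cast (mul_pos hπ hr).ne'
    have key : ((Real.pi * r : ℝ) : ℂ) * ψ'' v
        = (-(Complex.I * (lam : ℂ)) - (Real.pi : ℂ)) * ψ v := by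
      push_cast
      push_cast at h
      linear_combination h
    rw [hkdef, div_mul_eq_mul_div, eq_div_iff hπr]
    linear_combination key
  -- continuity
  have hcψ : ContinuousOn ψ (Set.Icc (-a) a) := fun v hv => (hψ1 v hv).continuousWithinAt
  have hcψ' : ContinuousOn ψ' (Set.Icc (-a) a) := fun v hv => (hψ2 v hv).continuousWithinAt
  -- F := conj ψ * ψ'
  set F : ℝ → ℂ := fun x => (starRingEnd ℂ) (ψ x) * ψ' x with hF
  set G : ℝ → ℂ := fun x => (starRingEnd ℂ) (ψ' x) * ψ' x + (starRingEnd ℂ) (ψ x) * ψ'' x with hG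
  have hFd : ∀ x ∈ Set.Icc (-a) a, HasDerivWithinAt F (G x) (Set.Icc (-a) a) x := by
    intro x hx
    exact ((hψ1 x hx).star).mul (hψ2 x hx)
  have hGcont : ContinuousOn G (Set.Icc (-a) a) := by
    apply ContinuousOn.add
    · exact (Complex.continuous_conj.comp_continuousOn hcψ').mul hcψ'
    · exact (Complex.continuous_conj.comp_continuousOn hcψ).mul hψ3
  have hGint : IntervalIntegrable G volume (-a) a := by
    apply ContinuousOn.intervalIntegrable
    rwa [huIcc]
  have hFTC : ∫ x in (-a)..a, G x = F a - F (-a) := by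
    apply intervalIntegral.integral_eq_sub_of_hasDeriv_right_of_le haa
    · exact fun x hx => (hFd x hx).continuousWithinAt
    · intro x hx
      exact ((hFd x (Set.Ioo_subset_Icc_self hx)).hasDerivAt
        (Icc_mem_nhds hx.1 hx.2)).hasDerivWithinAt
    · exact hGint
  have hF0 : F a - F (-a) = 0 := by simp [hF, hb1, hb2]
  -- rewrite ∫ G
  have hGeq : Set.EqOn G (fun x => ((Complex.normSq (ψ' x) : ℝ) : ℂ)
      + k * ((Complex.normSq (ψ x) : ℝ) : ℂ)) (Set.uIcc (-a) a) := by
    rw [huIcc]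
    intro x hx
    simp only [hG]
    rw [hA x hx, Complex.normSq_eq_conj_mul_self, Complex.normSq_eq_conj_mul_self]
    ring
  have hsplit : ∫ x in (-a)..a, G x
      = ((∫ x in (-a)..a, Complex.normSq (ψ' x) : ℝ) : ℂ)
        + k * ((∫ x in (-a)..a, Complex.normSq (ψ x) : ℝ) : ℂ) := by
    rw [intervalIntegral.integral_congr hGeq]
    rw [intervalIntegral.integral_add, intervalIntegral.integral_const_mul,
      intervalIntegral.integral_ofReal, intervalIntegral.integral_ofReal]
    · apply ContinuousOn.intervalIntegrable
      rw [huIcc]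
      exact Complex.continuous_ofReal.comp_continuousOn
        (Complex.continuous_normSq.comp_continuousOn hcψ')
    · apply ContinuousOn.intervalIntegrable
      rw [huIcc]
      exact continuous_const.continuousOn.mul (Complex.continuous_ofReal.comp_continuousOn
        (Complex.continuous_normSq.comp_continuousOn hcψ))
  set B : ℝ := ∫ x in (-a)..a, Complex.normSq (ψ x) with hBdef
  set A : ℝ := ∫ x in (-a)..a, Complex.normSq (ψ' x) with hAdef
  have hzero : (A : ℂ) + k * (B : ℂ) = 0 := by
    rw [← hsplit, hFTC, hF0]
  -- imaginary part
  have hImk : k.im = -lam / (Real.pi * r) := by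
    rw [hkdef]
    rw [Complex.div_ofReal]
    simp
  have hB0 : B = 0 := by
    have him : k.im * B = 0 := by
      have h := congrArg Complex.im hzero
      simpa [Complex.add_im, Complex.mul_im] using h
    have hne : k.im ≠ 0 := by
      rw [hImk]
      exact div_ne_zero (by linarith) (mul_pos hπ hr).ne'
    exact (mul_eq_zero.1 him).resolve_left hne
  -- conclude ψ = 0 on Icc
  intro v hv
  by_contra hψv
  rcases eq_or_lt_of_le hv.1 with h1 | h1
  · exact hψv (h1 ▸ hb1)
  rcases eq_or_lt_of_le hv.2 with h2 | h2
  · exact hψv (h2 ▸ hb2)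
  have hvIoo : v ∈ Set.Ioo (-a) a := ⟨h1, h2⟩
  set f : ℝ → ℝ := fun x => Complex.normSq (ψ x) with hfdef
  have hfc : ContinuousOn f (Set.Icc (-a) a) :=
    Complex.continuous_normSq.comp_continuousOn hcψ
  have hfv : 0 < f v := by
    simpa [hfdef, Complex.normSq_pos] using hψv
  have hfca : ContinuousAt f v :=
    (hfc v hv).continuousAt (Icc_mem_nhds hvIoo.1 hvIoo.2)
  have hev : ∀ᶠ x in nhds v, f v / 2 < f x ∧ x ∈ Set.Ioo (-a) a := by
    filter_upwards [hfca.eventually (eventually_gt_nhds (by linarith : f v / 2 < f v)),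
      Ioo_mem_nhds hvIoo.1 hvIoo.2] with x hx1 hx2
    exact ⟨hx1, hx2⟩
  rcases Metric.eventually_nhds_iff.1 hev with ⟨ε, hε, hball⟩
  have hmem : ∀ x ∈ Set.Icc (v - ε/2) (v + ε/2), f v / 2 < f x ∧ x ∈ Set.Ioo (-a) a := by
    intro x hx
    apply hball
    rw [Real.dist_eq, abs_sub_lt_iff]
    constructor <;> [linarith [hx.2]; linarith [hx.1]]
  have hsub : Set.Icc (v - ε/2) (v + ε/2) ⊆ Set.Icc (-a) a := by
    intro x hx
    exact Set.Ioo_subset_Icc_self (hmem x hx).2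
  have hlt : v - ε/2 < v + ε/2 := by linarith
  have hfiS : IntervalIntegrable f volume (v - ε/2) (v + ε/2) := by
    apply ContinuousOn.intervalIntegrable
    rw [Set.uIcc_of_le hlt.le]
    exact hfc.mono hsub
  have hpos : 0 < ∫ x in (v - ε/2)..(v + ε/2), f x := by
    apply intervalIntegral_pos_of_pos_on hfiS
    · intro x hx
      have := (hmem x (Set.Ioo_subset_Icc_self hx)).1
      linarith
    · exact hlt
  have hfiB : IntervalIntegrable f volume (-a) a := by
    apply ContinuousOn.intervalIntegrable
    rwa [huIcc]
  have hmono : (∫ x in (v - ε/2)..(v + ε/2), f x) ≤ ∫ x in (-a)..a, f x := by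
    apply intervalIntegral.integral_mono_interval
      (hsub ⟨le_refl _, hlt.le⟩).1 hlt.le (hsub ⟨hlt.le, le_refl _⟩).2
    · exact Filter.Eventually.of_forall fun x => Complex.normSq_nonneg _
    · exact hfiB
  rw [← hBdef] at hmono
  rw [hB0] at hmono
  linarith
end
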